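/- arXiv:2203.08497 — 2 statements merged into one kernel-verified Lean document; each statement's English description precedes it below -/
import Mathlib

section
/- Define c(k) = -(k + k(1 - m - n)(m + n) + (m+n)^2)/(k + m + n) + m(k - m - n - m^2(1 + k + m + n) + m(1 + 3(m+n))) for rational k ≠ -(m+n), and define c' (k) = k1*(n^2 - 1)/(k1 + n) + 1 where k1 = k + m - 1 and k0 = k + (m-1)(m+n)/m. Then for integers m ≥ 1, n ≥ 2, the rational solutions k of c(k) = c'(k) with k ≠ -(m+n), k1 ≠ -n and k0 ≠ 0 are exactly k = -(m+n) + (m+n)/(m+1), k = -(m+n) + (1+m+n)/m, and (if m > 1) k = (-1 + 2m - m^2 + 2n - mn)/(m-1). -/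
/-!
Clearing the two denominators `k + m + n` and `k1 + n`, the difference `c(k) - c'(k)` becomes a cubic
polynomial in `k` that splits into three linear factors, one per conformal level. The factor of the
third level has leading coefficient `m - 1`; at `m = 1` it is the nonzero constant `-n`.
-/

section CentralCharge

variable {K : Type*} [Field K]

def hookCentralCharge (M N k : K) : K :=
  -(k + k * (1 - M - N) * (M + N) + (M + N) ^ 2) / (k + M + N)
    + M * (k - M - N - M ^ 2 * (1 + k + M + N) + M * (1 + 3 * (M + N)))

-- The summand `1` is the central charge of the Heisenberg algebra `V^{k0}(CJ)`.
def sugawaraCentralCharge (N k1 : K) : K :=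
  k1 * (N ^ 2 - 1) / (k1 + N) + 1

theorem hookCentralCharge_sub_sugawaraCentralCharge {M N k : K}
    (hk : k + M + N ≠ 0) (hk1 : k + M - 1 + N ≠ 0) :
    hookCentralCharge M N k - sugawaraCentralCharge N (k + M - 1) =
      -(((M + 1) * (k + (M + N)) - (M + N)) * (M * (k + (M + N)) - (1 + M + N))
          * ((M - 1) * k - (-1 + 2 * M - M ^ 2 + 2 * N - M * N)))
        / ((k + M + N) * (k + M - 1 + N)) := by
  unfold hookCentralCharge sugawaraCentralCharge
  field_simp
  ring

theorem hookCentralCharge_eq_sugawaraCentralCharge_iff {M N k : K}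
    (hk : k + M + N ≠ 0) (hk1 : k + M - 1 + N ≠ 0) :
    hookCentralCharge M N k = sugawaraCentralCharge N (k + M - 1) ↔
      (M + 1) * (k + (M + N)) - (M + N) = 0 ∨ M * (k + (M + N)) - (1 + M + N) = 0
        ∨ (M - 1) * k - (-1 + 2 * M - M ^ 2 + 2 * N - M * N) = 0 := by
  rw [← sub_eq_zero, hookCentralCharge_sub_sugawaraCentralCharge hk hk1, div_eq_zero_iff,
    neg_eq_zero]
  simp only [mul_ne_zero hk hk1, or_false, mul_eq_zero, or_assoc]

theorem mul_add_sub_eq_zero_iff {a b c x : K} (ha : a ≠ 0) :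
    a * (x + c) - b = 0 ↔ x = -c + b / a := by
  rw [sub_eq_zero, mul_comm, ← eq_div_iff ha, eq_neg_add_iff_add_eq, add_comm]

theorem sub_one_mul_sub_eq_zero_iff {M N k : K} (hN : N ≠ 0) :
    (M - 1) * k - (-1 + 2 * M - M ^ 2 + 2 * N - M * N) = 0 ↔
      M ≠ 1 ∧ k = (-1 + 2 * M - M ^ 2 + 2 * N - M * N) / (M - 1) := by
  by_cases hM : M = 1
  · subst hM
    ring_nf
    simpa using hN
  · rw [sub_eq_zero, eq_div_iff (sub_ne_zero.mpr hM), mul_comm]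
    exact (and_iff_right hM).symm

end CentralCharge

theorem stmt3_general (m n : ℕ) (hm : 1 ≤ m) (hn : 2 ≤ n) (k : ℚ)
    (h1 : k ≠ -((m : ℚ) + n))
    (h2 : k + (m : ℚ) - 1 ≠ -(n : ℚ)) :
    (-(k + k * (1 - (m : ℚ) - n) * ((m : ℚ) + n) + ((m : ℚ) + n) ^ 2) / (k + m + n)
        + (m : ℚ) * (k - m - n - (m : ℚ) ^ 2 * (1 + k + m + n)
            + (m : ℚ) * (1 + 3 * ((m : ℚ) + n)))
      = (k + (m : ℚ) - 1) * ((n : ℚ) ^ 2 - 1) / ((k + (m : ℚ) - 1) + n) + 1)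
    ↔ (k = -((m : ℚ) + n) + ((m : ℚ) + n) / (m + 1)
        ∨ k = -((m : ℚ) + n) + (1 + (m : ℚ) + n) / m
        ∨ (1 < m ∧ k = (-1 + 2 * (m : ℚ) - (m : ℚ) ^ 2 + 2 * n - (m : ℚ) * n) / ((m : ℚ) - 1))) := by
  have hk : k + m + n ≠ 0 := fun h => h1 (by linarith)
  have hk1 : k + m - 1 + n ≠ 0 := fun h => h2 (by linarith)
  have hm0 : (m : ℚ) ≠ 0 := Nat.cast_ne_zero.mpr (by omega)
  have hn0 : (n : ℚ) ≠ 0 := Nat.cast_ne_zero.mpr (by omega)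
  have hm1 : (m : ℚ) ≠ 1 ↔ 1 < m := by rw [Ne, Nat.cast_eq_one]; omega
  change hookCentralCharge (m : ℚ) n k = sugawaraCentralCharge (n : ℚ) (k + m - 1) ↔ _
  rw [hookCentralCharge_eq_sugawaraCentralCharge_iff hk hk1,
    mul_add_sub_eq_zero_iff (by positivity), mul_add_sub_eq_zero_iff hm0,
    sub_one_mul_sub_eq_zero_iff hn0, hm1]

/-- equality of the central charge of the hook W-algebra with the
Sugawara central charge of its affine part characterizes the conformal levels
`k⁽¹⁾, k⁽²⁾` and (for `m > 1`) `k⁽³⁾`. -/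
theorem stmt3 (m n : ℕ) (hm : 1 ≤ m) (hn : 2 ≤ n) (k : ℚ)
    (h1 : k ≠ -((m : ℚ) + n))
    (h2 : k + (m : ℚ) - 1 ≠ -(n : ℚ))
    (h3 : k + ((m : ℚ) - 1) * ((m : ℚ) + n) / m ≠ 0) :
    (-(k + k * (1 - (m : ℚ) - n) * ((m : ℚ) + n) + ((m : ℚ) + n) ^ 2) / (k + m + n)
        + (m : ℚ) * (k - m - n - (m : ℚ) ^ 2 * (1 + k + m + n)
            + (m : ℚ) * (1 + 3 * ((m : ℚ) + n)))
      = (k + (m : ℚ) - 1) * ((n : ℚ) ^ 2 - 1) / ((k + (m : ℚ) - 1) + n) + 1)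
    ↔ (k = -((m : ℚ) + n) + ((m : ℚ) + n) / (m + 1)
        ∨ k = -((m : ℚ) + n) + (1 + (m : ℚ) + n) / m
        ∨ (1 < m ∧ k = (-1 + 2 * (m : ℚ) - (m : ℚ) ^ 2 + 2 * n - (m : ℚ) * n) / ((m : ℚ) - 1))) :=
  stmt3_general m n hm hn k h1 h2
end

section
/- Let m ≥ 2, n ≥ 1 be integers and set h = m + n, k = -((m-2)h + 1)/(m-1), k0 = k + (m-1)h/m, k1 = k + m - 1. Then (1/2)*(h/(m*n*k0)) + (n^2 - 1)/(2n(k1 + n)) = (m-1)(m + n^2 + n - 1)/(2n^2), and this quantity equals (m+1)/2 if and only if n = m - 1. -/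
/-- at `k = k⁽³⁾ = -((m-2)h+1)/(m-1)`, the Sugawara conformal weight
of the modules `ℂⁿ, (ℂⁿ)*` equals `(m-1)(m+n²+n-1)/(2n²)`, which equals `(m+1)/2`
iff `n = m - 1`. -/
theorem stmt5 (m n : ℕ) (hm : 2 ≤ m) (hn : 1 ≤ n) (h k k0 k1 : ℚ)
    (hh : h = (m : ℚ) + n)
    (hk : k = -(((m : ℚ) - 2) * h + 1) / ((m : ℚ) - 1))
    (hk0 : k0 = k + ((m : ℚ) - 1) * h / m)
    (hk1 : k1 = k + (m : ℚ) - 1) :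
    (1 / 2) * (h / ((m : ℚ) * n * k0)) + ((n : ℚ) ^ 2 - 1) / (2 * n * (k1 + n))
      = ((m : ℚ) - 1) * ((m : ℚ) + (n : ℚ) ^ 2 + n - 1) / (2 * (n : ℚ) ^ 2) ∧
    (((m : ℚ) - 1) * ((m : ℚ) + (n : ℚ) ^ 2 + n - 1) / (2 * (n : ℚ) ^ 2)
        = ((m : ℚ) + 1) / 2 ↔ n = m - 1) := by
  have hm2 : (2:ℚ) ≤ (m:ℚ) := by exact_mod_cast hm
  have hn1 : (1:ℚ) ≤ (n:ℚ) := by exact_mod_cast hn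
  have hm0 : (m:ℚ) ≠ 0 := by linarith
  have hm1 : (m:ℚ) - 1 ≠ 0 := by intro h'; linarith
  have hn0 : (n:ℚ) ≠ 0 := by linarith
  have hk0' : k0 = (n:ℚ) / ((m:ℚ) * ((m:ℚ) - 1)) := by
    rw [hk0, hk, hh]; field_simp; ring
  have hk1' : k1 + (n:ℚ) = (n:ℚ) / ((m:ℚ) - 1) := by
    rw [hk1, hk, hh]; field_simp; ring
  constructor
  · rw [hk0', hk1', hh]
    field_simp
    ring
  · constructor
    · intro hEq
      have h2 : ((m:ℚ) - 1) * ((m:ℚ) + (n:ℚ)^2 + (n:ℚ) - 1) = ((m:ℚ) + 1) * (n:ℚ)^2 := by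
        field_simp at hEq; linarith
      have h3 : ((n:ℚ) - ((m:ℚ) - 1)) * (2*(n:ℚ) + ((m:ℚ) - 1)) = 0 := by
        linear_combination -h2
      have hpos : 2*(n:ℚ) + ((m:ℚ) - 1) ≠ 0 := by intro h'; linarith
      have h4 : (n:ℚ) = (m:ℚ) - 1 := by
        rcases mul_eq_zero.mp h3 with h' | h'
        · linarith
        · exact absurd h' hpos
      have h5 : (n:ℚ) + 1 = (m:ℚ) := by linarith
      have h6 : n + 1 = m := by exact_mod_cast h5
      omega
    · intro hEq
      have h5 : n + 1 = m := by omega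
      have h4 : (n:ℚ) = (m:ℚ) - 1 := by
        have : ((n:ℚ)) + 1 = (m:ℚ) := by exact_mod_cast h5
        linarith
      rw [h4]
      have hne : ((m:ℚ) - 1) ^ 2 ≠ 0 := pow_ne_zero 2 hm1
      field_simp
      ring
end
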